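/- arXiv:0906.3196 — 8 statements merged into one kernel-verified Lean document; each statement's English description precedes it below -/
import Mathlib

section
/- Let A be a Hermitian n₁×n₁ complex matrix, C a Hermitian n₂×n₂ complex matrix such that both C and 1 − C are positive definite, B an n₁×n₂ complex matrix, and Q = fromBlocks A B Bᴴ C. Then Q and 1 − Q are both positive semidefinite if and only if B C⁻¹ Bᴴ ≤ A and B (1 − C)⁻¹ Bᴴ ≤ 1 − A. -/
open Matrix
open scoped ComplexOrder

namespace Matrix

variable {m n α : Type*}

theorem one_sub_fromBlocks [DecidableEq m] [DecidableEq n] [Ring α]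
    (A : Matrix m m α) (B : Matrix m n α) (C : Matrix n m α) (D : Matrix n n α) :
    1 - fromBlocks A B C D = fromBlocks (1 - A) (-B) (-C) (1 - D) := by
  rw [← fromBlocks_one, sub_eq_add_neg, fromBlocks_neg, fromBlocks_add]
  simp only [zero_add, sub_eq_add_neg]

theorem posSemidef_fromBlocks_and_one_sub_iff [Finite m] [Fintype n] [DecidableEq m]
    [DecidableEq n] {K : Type*} [Field K] [PartialOrder K] [StarRing K] [StarOrderedRing K]
    (A : Matrix m m K) (B : Matrix m n K) {C : Matrix n n K} (hC : C.PosDef)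
    (hC' : (1 - C).PosDef) :
    ((fromBlocks A B Bᴴ C).PosSemidef ∧ (1 - fromBlocks A B Bᴴ C).PosSemidef) ↔
      ((A - B * C⁻¹ * Bᴴ).PosSemidef ∧ ((1 - A) - B * (1 - C)⁻¹ * Bᴴ).PosSemidef) := by
  have := hC.isUnit.invertible
  have := hC'.isUnit.invertible
  rw [one_sub_fromBlocks, ← conjTranspose_neg, PosDef.fromBlocks₂₂ _ _ hC,
    PosDef.fromBlocks₂₂ _ _ hC']
  simp only [conjTranspose_neg, Matrix.neg_mul, Matrix.mul_neg, neg_neg]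

end Matrix

theorem stmt_1_general {n₁ n₂ : ℕ}
    (A : Matrix (Fin n₁) (Fin n₁) ℂ) (C : Matrix (Fin n₂) (Fin n₂) ℂ)
    (B : Matrix (Fin n₁) (Fin n₂) ℂ)
    (hC : C.PosDef) (hC' : (1 - C).PosDef)
    (Q : Matrix (Fin n₁ ⊕ Fin n₂) (Fin n₁ ⊕ Fin n₂) ℂ)
    (hQ : Q = fromBlocks A B Bᴴ C) :
    (Q.PosSemidef ∧ (1 - Q).PosSemidef) ↔
      ((A - B * C⁻¹ * Bᴴ).PosSemidef ∧ ((1 - A) - B * (1 - C)⁻¹ * Bᴴ).PosSemidef) :=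
  hQ ▸ posSemidef_fromBlocks_and_one_sub_iff A B hC hC'

/-- For `Q = fromBlocks A B Bᴴ C` with `A` Hermitian and `C`, `1 - C` positive definite,
`Q` and `1 - Q` are positive semidefinite iff `B C⁻¹ Bᴴ ≤ A` and `B (1 - C)⁻¹ Bᴴ ≤ 1 - A`. -/
theorem stmt_1 {n₁ n₂ : ℕ}
    (A : Matrix (Fin n₁) (Fin n₁) ℂ) (C : Matrix (Fin n₂) (Fin n₂) ℂ)
    (B : Matrix (Fin n₁) (Fin n₂) ℂ)
    (hA : A.IsHermitian) (hC : C.PosDef) (hC' : (1 - C).PosDef)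
    (Q : Matrix (Fin n₁ ⊕ Fin n₂) (Fin n₁ ⊕ Fin n₂) ℂ)
    (hQ : Q = fromBlocks A B Bᴴ C) :
    (Q.PosSemidef ∧ (1 - Q).PosSemidef) ↔
      ((A - B * C⁻¹ * Bᴴ).PosSemidef ∧ ((1 - A) - B * (1 - C)⁻¹ * Bᴴ).PosSemidef) :=
  stmt_1_general A C B hC hC' Q hQ
end

section
/- Let C be a Hermitian n×n complex matrix such that both C and 1 − C are positive definite, and let L be a positive semidefinite n×n complex matrix. Then the matrix 1 − C + CL is invertible. -/
open Matrix
open scoped ComplexOrder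

/-!
With `S = √C`, the matrix `1 - C + C L` is similar to `S⁻¹ (1 - C + C L) S = 1 - C + S L S`,
which is positive definite as the sum of the positive definite `1 - C` and the positive
semidefinite `S L S = Sᴴ L S`; in particular it is invertible.
-/

theorem one_sub_add_mul_mul_eq_mul {R : Type*} [Ring R] {S C L : R} (hS : S * S = C) :
    (1 - C + C * L) * S = S * (1 - C + S * L * S) := by
  subst hS
  noncomm_ring

namespace Matrix

variable {n 𝕜 : Type*} [Fintype n] [DecidableEq n] [RCLike 𝕜]

open scoped MatrixOrder in
theorem PosDef.exists_isUnit_isHermitian_mul_self_eq {C : Matrix n n 𝕜} (hC : C.PosDef) :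
    ∃ S : Matrix n n 𝕜, IsUnit S ∧ S.IsHermitian ∧ S * S = C :=
  ⟨CFC.sqrt C, hC.isStrictlyPositive.isUnit_cfcSqrt, (CFC.sqrt_nonneg C).posSemidef.isHermitian,
    CFC.sqrt_mul_sqrt_self C hC.posSemidef.nonneg⟩

theorem PosDef.isUnit_one_sub_add_mul {C L : Matrix n n 𝕜} (hC : C.PosDef) (hC' : (1 - C).PosDef)
    (hL : L.PosSemidef) : IsUnit (1 - C + C * L) := by
  obtain ⟨S, hSu, hSH, hSS⟩ := hC.exists_isUnit_isHermitian_mul_self_eq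
  have hconj : (1 - C + S * L * S).PosDef := by
    refine hC'.add_posSemidef ?_
    simpa only [hSH.eq] using hL.conjTranspose_mul_mul_same S
  rw [← hSu.mul_right_iff, one_sub_add_mul_mul_eq_mul hSS]
  exact hSu.mul hconj.isUnit

end Matrix

/-- If `C` and `1 - C` are positive definite and `L` is positive semidefinite,
then `1 - C + C * L` is invertible. -/
theorem stmt_3 {n : ℕ}
    (C L : Matrix (Fin n) (Fin n) ℂ)
    (hC : C.PosDef) (hC' : (1 - C).PosDef) (hL : L.PosSemidef) :
    IsUnit (1 - C + C * L) :=
  hC.isUnit_one_sub_add_mul hC' hL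
end

section
/- Let A be an n₁×n₁ complex matrix, C an n₂×n₂ complex matrix, B an n₁×n₂ complex matrix, Q = fromBlocks A B Bᴴ C, let K be an n₁×n₁ complex matrix and L an n₂×n₂ complex matrix such that 1 − C + CL is invertible, and set Ã = A − B(L − 1)(1 − C + CL)⁻¹Bᴴ. Then det(1 − Q + Q·(K ⊕ L)) = det(1 − C + CL) · det(1 − Ã + ÃK), where K ⊕ L denotes the block-diagonal matrix fromBlocks K 0 0 L. -/
open Matrix

namespace Matrix

variable {m n α : Type*} [Fintype m] [Fintype n] [DecidableEq m] [DecidableEq n]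

theorem one_sub_add_mul_fromBlocks_diagonal [Ring α]
    (A : Matrix m m α) (B : Matrix m n α) (C : Matrix n m α) (D : Matrix n n α)
    (K : Matrix m m α) (L : Matrix n n α) :
    1 - fromBlocks A B C D + fromBlocks A B C D * fromBlocks K 0 0 L
      = fromBlocks (1 - A + A * K) (B * (L - 1)) (C * (K - 1)) (1 - D + D * L) := by
  rw [← fromBlocks_one, fromBlocks_multiply, sub_eq_add_neg, fromBlocks_neg, fromBlocks_add,
    fromBlocks_add]
  congr 1 <;> simp only [Matrix.mul_zero, Matrix.mul_sub, Matrix.mul_one, zero_add, add_zero] <;>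
    abel

/-- The Schur complement of the lower-right block `1 - D + D L` is again of the form `1 - Ã + Ã K`. -/
theorem det_one_sub_add_mul_fromBlocks_diagonal [CommRing α]
    (A : Matrix m m α) (B : Matrix m n α) (C : Matrix n m α) (D : Matrix n n α)
    (K : Matrix m m α) (L : Matrix n n α) (hD : IsUnit (1 - D + D * L)) :
    (1 - fromBlocks A B C D + fromBlocks A B C D * fromBlocks K 0 0 L).det
      = (1 - D + D * L).det
        * (1 - (A - B * (L - 1) * (1 - D + D * L)⁻¹ * C)
            + (A - B * (L - 1) * (1 - D + D * L)⁻¹ * C) * K).det := by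
  have := hD.invertible
  rw [one_sub_add_mul_fromBlocks_diagonal, det_fromBlocks₂₂, invOf_eq_nonsing_inv]
  congr 2
  simp only [Matrix.mul_sub, Matrix.sub_mul, Matrix.mul_one, Matrix.mul_assoc]
  abel

end Matrix

/-- For `Q = fromBlocks A B Bᴴ C`, matrices `K`, `L` with `1 - C + C * L` invertible and
`Atilde = A - B (L - 1) (1 - C + C L)⁻¹ Bᴴ`, one has
`det (1 - Q + Q (K ⊕ L)) = det (1 - C + C L) * det (1 - Atilde + Atilde K)`. -/
theorem stmt_5 {n₁ n₂ : ℕ}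
    (A : Matrix (Fin n₁) (Fin n₁) ℂ) (C : Matrix (Fin n₂) (Fin n₂) ℂ)
    (B : Matrix (Fin n₁) (Fin n₂) ℂ)
    (Q : Matrix (Fin n₁ ⊕ Fin n₂) (Fin n₁ ⊕ Fin n₂) ℂ)
    (hQ : Q = fromBlocks A B Bᴴ C)
    (K : Matrix (Fin n₁) (Fin n₁) ℂ) (L : Matrix (Fin n₂) (Fin n₂) ℂ)
    (hinv : IsUnit (1 - C + C * L))
    (Atilde : Matrix (Fin n₁) (Fin n₁) ℂ)
    (hAtilde : Atilde = A - B * (L - 1) * (1 - C + C * L)⁻¹ * Bᴴ) :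
    (1 - Q + Q * fromBlocks K 0 0 L).det
      = (1 - C + C * L).det * (1 - Atilde + Atilde * K).det := by
  subst hQ hAtilde
  exact det_one_sub_add_mul_fromBlocks_diagonal A B Bᴴ C K L hinv
end

section
/- Let C and L be Hermitian n×n complex matrices such that 1 − C + CL is invertible. Then the matrix (L − 1)(1 − C + CL)⁻¹ is Hermitian; equivalently, (1 − C + LC)⁻¹(L − 1) = (L − 1)(1 − C + CL)⁻¹. Consequently, for any n₁×n complex matrix B, the matrix B(L − 1)(1 − C + CL)⁻¹Bᴴ is Hermitian. -/
open Matrix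

/-! The ring identity `(L - 1)(1 - C + C L) = (1 - C + L C)(L - 1)` says that `X = L - 1`
intertwines `N = 1 - C + C L` with `Nᴴ = 1 - C + L C`. Inverting, `X N⁻¹ = Nᴴ⁻¹ X`, and since
`Nᴴ⁻¹ = N⁻¹ᴴ` and `X` is Hermitian, the right-hand side is `(X N⁻¹)ᴴ`. -/

theorem semiconjBy_sub_one_one_sub_add_mul {R : Type*} [Ring R] (C L : R) :
    SemiconjBy (L - 1) (1 - C + C * L) (1 - C + L * C) := by
  unfold SemiconjBy
  noncomm_ring

section

variable {n α : Type*} [Fintype n] [DecidableEq n] [CommRing α]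

theorem Matrix.conjTranspose_one_sub_add_mul [StarRing α] {C L : Matrix n n α}
    (hC : C.IsHermitian) (hL : L.IsHermitian) : (1 - C + C * L)ᴴ = 1 - C + L * C := by
  rw [conjTranspose_add, conjTranspose_sub, conjTranspose_mul, conjTranspose_one, hC.eq, hL.eq]

theorem SemiconjBy.nonsing_inv {X N M : Matrix n n α} (h : SemiconjBy X N M) (hN : IsUnit N)
    (hM : IsUnit M) : SemiconjBy X N⁻¹ M⁻¹ := by
  obtain ⟨u, rfl⟩ := hN
  obtain ⟨v, rfl⟩ := hM
  rw [← coe_units_inv, ← coe_units_inv]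
  exact h.units_inv_right

theorem Matrix.IsHermitian.mul_nonsing_inv_of_semiconjBy [StarRing α] {X N : Matrix n n α}
    (hX : X.IsHermitian) (hN : IsUnit N) (h : SemiconjBy X N Nᴴ) : (X * N⁻¹).IsHermitian := by
  rw [IsHermitian, conjTranspose_mul, conjTranspose_nonsing_inv, hX.eq]
  exact (h.nonsing_inv hN hN.star).symm

end

/-- For Hermitian `C`, `L` with `1 - C + C L` invertible, the matrix
`(L - 1)(1 - C + C L)⁻¹` is Hermitian; equivalently
`(1 - C + L C)⁻¹ (L - 1) = (L - 1)(1 - C + C L)⁻¹`; consequently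
`B (L - 1)(1 - C + C L)⁻¹ Bᴴ` is Hermitian for every rectangular `B`. -/
theorem stmt_6 {n n₁ : ℕ}
    (C L : Matrix (Fin n) (Fin n) ℂ)
    (hC : C.IsHermitian) (hL : L.IsHermitian)
    (hinv : IsUnit (1 - C + C * L)) :
    ((L - 1) * (1 - C + C * L)⁻¹).IsHermitian ∧
    (1 - C + L * C)⁻¹ * (L - 1) = (L - 1) * (1 - C + C * L)⁻¹ ∧
    ∀ B : Matrix (Fin n₁) (Fin n) ℂ,
      (B * (L - 1) * (1 - C + C * L)⁻¹ * Bᴴ).IsHermitian := by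
  have hadj := conjTranspose_one_sub_add_mul hC hL
  have hsemi : SemiconjBy (L - 1) (1 - C + C * L) (1 - C + C * L)ᴴ :=
    hadj ▸ semiconjBy_sub_one_one_sub_add_mul C L
  have hherm := (hL.sub isHermitian_one).mul_nonsing_inv_of_semiconjBy hinv hsemi
  refine ⟨hherm, ?_, fun B => ?_⟩
  · rw [← hadj]
    exact (hsemi.nonsing_inv hinv hinv.star).symm
  · simpa only [Matrix.mul_assoc] using isHermitian_mul_mul_conjTranspose B hherm
end

section
/- Let C be a Hermitian n×n complex matrix such that both C and 1 − C are positive definite, and let L be a positive semidefinite n×n complex matrix. Then the Hermitian matrix M := (1 − L)(1 − C + CL)⁻¹ satisfies −C⁻¹ ≤ M ≤ (1 − C)⁻¹. -/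
/-!
Put `B = C(1 - C) + CLC`, so that `(1 - C + CL) C = B`. Then `M = B⁻¹ - C⁻¹`, and the case
`L = 0` of the same identity reads `(1 - C)⁻¹ = (C(1 - C))⁻¹ - C⁻¹`. The lower bound is thus
`0 ≤ B⁻¹`, and the upper bound is the antitonicity of inversion applied to `C(1 - C) ≤ B`,
where `C(1 - C)` is positive definite as a product of commuting positive definite matrices.
-/

open Matrix
open scoped ComplexOrder

namespace Matrix

variable {n : Type*} [Fintype n] [DecidableEq n]

lemma one_sub_mul_inv_one_sub_add_mul {α : Type*} [CommRing α] {C L : Matrix n n α}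
    (hC : IsUnit C) (hB : IsUnit (C * (1 - C) + C * L * C)) :
    (1 - L) * (1 - C + C * L)⁻¹ = (C * (1 - C) + C * L * C)⁻¹ - C⁻¹ := by
  have hA : (1 - C + C * L)⁻¹ = C * (C * (1 - C) + C * L * C)⁻¹ := by
    refine inv_eq_right_inv ?_
    rw [← Matrix.mul_assoc, show (1 - C + C * L) * C = C * (1 - C) + C * L * C by noncomm_ring,
      mul_nonsing_inv _ ((isUnit_iff_isUnit_det _).mp hB)]
  rw [hA, ← neg_sub C⁻¹, inv_sub_inv (iff_of_true hC hB),
    show C * (1 - C) + C * L * C - C = C * (L * C - C) by noncomm_ring,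
    nonsing_inv_mul_cancel_left (A := C) (L * C - C) ((isUnit_iff_isUnit_det C).mp hC)]
  noncomm_ring

lemma PosDef.mul_one_sub {𝕜 : Type*} [RCLike 𝕜] {C : Matrix n n 𝕜} (hC : C.PosDef)
    (hC' : (1 - C).PosDef) : (C * (1 - C)).PosDef := by
  open scoped MatrixOrder in
  exact ((hC.isStrictlyPositive.commute_iff hC'.isStrictlyPositive).mp
    ((Commute.one_right C).sub_right (Commute.refl C))).posDef

lemma PosDef.posSemidef_inv_sub_inv {A B : Matrix n n ℂ} (hA : A.PosDef)
    (hAB : (B - A).PosSemidef) : (A⁻¹ - B⁻¹).PosSemidef := by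
  open scoped MatrixOrder Matrix.Norms.L2Operator in
  simpa only [le_iff, nonsing_inv_eq_ringInverse] using
    CStarAlgebra.ringInverse_le_ringInverse (a := A) (b := B) hAB hA.isStrictlyPositive

end Matrix

/-- If `C` and `1 - C` are positive definite and `L` is positive semidefinite, then
`M = (1 - L)(1 - C + C L)⁻¹` satisfies `-C⁻¹ ≤ M ≤ (1 - C)⁻¹`. -/
theorem stmt_7 {n : ℕ}
    (C L : Matrix (Fin n) (Fin n) ℂ)
    (hC : C.PosDef) (hC' : (1 - C).PosDef) (hL : L.PosSemidef)
    (M : Matrix (Fin n) (Fin n) ℂ)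
    (hM : M = (1 - L) * (1 - C + C * L)⁻¹) :
    (M - (-C⁻¹)).PosSemidef ∧ ((1 - C)⁻¹ - M).PosSemidef := by
  have hP := hC.mul_one_sub hC'
  have hCLC : (C * L * C).PosSemidef := by
    simpa only [hC.isHermitian.eq] using hL.conjTranspose_mul_mul_same C
  have hB := hP.add_posSemidef hCLC
  have h1C : (1 - C)⁻¹ = (C * (1 - C))⁻¹ - C⁻¹ := by
    simpa using one_sub_mul_inv_one_sub_add_mul (L := 0) hC.isUnit (by simpa using hP.isUnit)
  rw [hM, one_sub_mul_inv_one_sub_add_mul hC.isUnit hB.isUnit, h1C, sub_neg_eq_add,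
    sub_add_cancel, sub_sub_sub_cancel_right]
  exact ⟨hB.inv.posSemidef, hP.posSemidef_inv_sub_inv (by rwa [add_sub_cancel_left])⟩
end

section
/- Let A be a Hermitian n₁×n₁ complex matrix, C a Hermitian n₂×n₂ complex matrix such that both C and 1 − C are positive definite, B an n₁×n₂ complex matrix, and L a positive semidefinite n₂×n₂ complex matrix. Set Ã = A − B(L − 1)(1 − C + CL)⁻¹Bᴴ. Then A − B C⁻¹ Bᴴ ≤ Ã ≤ A + B (1 − C)⁻¹ Bᴴ. -/
/-!
Put `K = C⁻¹ - 1` and `N = K + L`; both are positive definite, and `1 - C + C L = C N`.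
Then `(L - 1)(1 - C + C L)⁻¹ = C⁻¹ - C⁻¹ N⁻¹ C⁻¹` and `(1 - C)⁻¹ + C⁻¹ = C⁻¹ K⁻¹ C⁻¹`, so the two
differences in question are `B C⁻¹ N⁻¹ C⁻¹ Bᴴ` and `B C⁻¹ (K⁻¹ - N⁻¹) C⁻¹ Bᴴ`. The first is
positive semidefinite since `N` is, the second since `K ≤ N` implies `N⁻¹ ≤ K⁻¹`.
-/

open Matrix
open scoped ComplexOrder

namespace Matrix

variable {n : Type*} [Fintype n]

section Identities

variable [DecidableEq n] {R : Type*} [CommRing R]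

lemma inv_one_sub_add_inv {C : Matrix n n R} (hC : IsUnit C.det) (hC' : IsUnit (1 - C).det) :
    (1 - C)⁻¹ + C⁻¹ = C⁻¹ * (C⁻¹ - 1)⁻¹ * C⁻¹ := by
  have hK : C⁻¹ - 1 = C⁻¹ * (1 - C) := by
    rw [mul_sub, mul_one, nonsing_inv_mul _ hC]
  calc (1 - C)⁻¹ + C⁻¹ = C⁻¹ * ((1 - C) + C) * (1 - C)⁻¹ := by
        rw [mul_add, add_mul, nonsing_inv_mul _ hC, one_mul, mul_assoc,
          mul_nonsing_inv _ hC', mul_one, add_comm]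
    _ = C⁻¹ * ((1 - C)⁻¹ * C) * C⁻¹ := by
        rw [sub_add_cancel, mul_one, ← mul_assoc, mul_assoc _ C, mul_nonsing_inv _ hC, mul_one]
    _ = C⁻¹ * (C⁻¹ - 1)⁻¹ * C⁻¹ := by
        rw [hK, mul_inv_rev, nonsing_inv_nonsing_inv _ hC]

lemma sub_one_mul_inv_one_sub_add_mul {C L : Matrix n n R} (hC : IsUnit C.det)
    (hN : IsUnit (C⁻¹ - 1 + L).det) :
    (L - 1) * (1 - C + C * L)⁻¹ = C⁻¹ - C⁻¹ * (C⁻¹ - 1 + L)⁻¹ * C⁻¹ := by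
  have hD : 1 - C + C * L = C * (C⁻¹ - 1 + L) := by
    rw [mul_add, mul_sub, mul_nonsing_inv _ hC, mul_one]
  have hL : L - 1 = (C⁻¹ - 1 + L) - C⁻¹ := by abel
  rw [hD, mul_inv_rev, hL, sub_mul, ← mul_assoc, mul_nonsing_inv _ hN, one_mul, mul_assoc]

end Identities

section Positivity

variable {𝕜 : Type*} [RCLike 𝕜]

lemma PosSemidef.mul_mul_self_of_isHermitian {M H : Matrix n n 𝕜} (hM : M.PosSemidef)
    (hH : H.IsHermitian) : (H * M * H).PosSemidef := by
  simpa only [hH.eq] using hM.conjTranspose_mul_mul_same H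

variable [DecidableEq n]

lemma PosDef.inv_sub_one {C : Matrix n n 𝕜} (hC : C.PosDef) (hC' : (1 - C).PosDef) :
    (C⁻¹ - 1).PosDef := by
  have hC₁ := hC.det_pos.ne'.isUnit
  have h : C⁻¹ - 1 = (1 - C) + (1 - C) * C⁻¹ * (1 - C) := by
    simp only [sub_mul, mul_sub, one_mul, mul_one, mul_nonsing_inv _ hC₁,
      nonsing_inv_mul _ hC₁]
    abel
  rw [h]
  exact hC'.add_posSemidef (hC.inv.posSemidef.mul_mul_self_of_isHermitian hC'.isHermitian)

lemma PosDef.posSemidef_inv_sub_inv_s8 {P Q : Matrix n n 𝕜} (hP : P.PosDef) (hQ : Q.PosDef)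
    (hPQ : (Q - P).PosSemidef) : (P⁻¹ - Q⁻¹).PosSemidef := by
  have hP₁ := hP.det_pos.ne'.isUnit
  have hQ₁ := hQ.det_pos.ne'.isUnit
  have h : P⁻¹ - Q⁻¹ =
      Q⁻¹ * (Q - P) * Q⁻¹ + ((Q - P) * Q⁻¹)ᴴ * P⁻¹ * ((Q - P) * Q⁻¹) := by
    rw [conjTranspose_mul, hQ.isHermitian.inv.eq, hPQ.isHermitian.eq]
    simp only [mul_sub, sub_mul, mul_assoc, mul_nonsing_inv _ hP₁, nonsing_inv_mul _ hQ₁,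
      mul_nonsing_inv _ hQ₁, mul_one, one_mul]
    simp only [← mul_assoc, nonsing_inv_mul _ hP₁, one_mul]
    abel
  rw [h]
  exact (hPQ.mul_mul_self_of_isHermitian hQ.isHermitian.inv).add
    (hP.inv.posSemidef.conjTranspose_mul_mul_same _)

end Positivity

end Matrix

theorem stmt_8_general {n₁ n₂ : ℕ}
    (A : Matrix (Fin n₁) (Fin n₁) ℂ) (C : Matrix (Fin n₂) (Fin n₂) ℂ)
    (B : Matrix (Fin n₁) (Fin n₂) ℂ)
    (hC : C.PosDef) (hC' : (1 - C).PosDef)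
    (L : Matrix (Fin n₂) (Fin n₂) ℂ) (hL : L.PosSemidef)
    (Atilde : Matrix (Fin n₁) (Fin n₁) ℂ)
    (hAtilde : Atilde = A - B * (L - 1) * (1 - C + C * L)⁻¹ * Bᴴ) :
    (Atilde - (A - B * C⁻¹ * Bᴴ)).PosSemidef ∧
    ((A + B * (1 - C)⁻¹ * Bᴴ) - Atilde).PosSemidef := by
  have hK := hC.inv_sub_one hC'
  have hN := hK.add_posSemidef hL
  have hCinv := hC.isHermitian.inv
  have hD := sub_one_mul_inv_one_sub_add_mul hC.det_pos.ne'.isUnit hN.det_pos.ne'.isUnit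
  have hKinv := inv_one_sub_add_inv hC.det_pos.ne'.isUnit hC'.det_pos.ne'.isUnit
  have hKleN : (C⁻¹ - 1 + L - (C⁻¹ - 1)).PosSemidef := by rwa [add_sub_cancel_left]
  subst hAtilde
  constructor
  · have hdiff : A - B * (L - 1) * (1 - C + C * L)⁻¹ * Bᴴ - (A - B * C⁻¹ * Bᴴ)
        = B * (C⁻¹ * (C⁻¹ - 1 + L)⁻¹ * C⁻¹) * Bᴴ := by
      rw [Matrix.mul_assoc B (L - 1), hD, Matrix.mul_sub, Matrix.sub_mul]
      abel
    rw [hdiff]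
    exact (hN.inv.posSemidef.mul_mul_self_of_isHermitian hCinv).mul_mul_conjTranspose_same B
  · have hdiff : A + B * (1 - C)⁻¹ * Bᴴ - (A - B * (L - 1) * (1 - C + C * L)⁻¹ * Bᴴ)
        = B * (C⁻¹ * ((C⁻¹ - 1)⁻¹ - (C⁻¹ - 1 + L)⁻¹) * C⁻¹) * Bᴴ := by
      rw [Matrix.mul_assoc B (L - 1), hD, mul_sub, sub_mul, ← hKinv]
      simp only [Matrix.mul_sub, Matrix.sub_mul, Matrix.mul_add, Matrix.add_mul]
      abel
    rw [hdiff]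
    exact ((hK.posSemidef_inv_sub_inv_s8 hN hKleN).mul_mul_self_of_isHermitian hCinv
      ).mul_mul_conjTranspose_same B

/-- For `A` Hermitian, `C` with `C`, `1 - C` positive definite, `L` positive semidefinite and
`Ã = A - B (L - 1)(1 - C + C L)⁻¹ Bᴴ`, one has `A - B C⁻¹ Bᴴ ≤ Ã ≤ A + B (1 - C)⁻¹ Bᴴ`. -/
theorem stmt_8 {n₁ n₂ : ℕ}
    (A : Matrix (Fin n₁) (Fin n₁) ℂ) (C : Matrix (Fin n₂) (Fin n₂) ℂ)
    (B : Matrix (Fin n₁) (Fin n₂) ℂ)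
    (hA : A.IsHermitian) (hC : C.PosDef) (hC' : (1 - C).PosDef)
    (L : Matrix (Fin n₂) (Fin n₂) ℂ) (hL : L.PosSemidef)
    (Atilde : Matrix (Fin n₁) (Fin n₁) ℂ)
    (hAtilde : Atilde = A - B * (L - 1) * (1 - C + C * L)⁻¹ * Bᴴ) :
    (Atilde - (A - B * C⁻¹ * Bᴴ)).PosSemidef ∧
    ((A + B * (1 - C)⁻¹ * Bᴴ) - Atilde).PosSemidef :=
  stmt_8_general A C B hC hC' L hL Atilde hAtilde
end

section
/- Let C be a Hermitian positive definite n×n complex matrix, let 0 < ε ≤ 1, and let K be a Hermitian n×n complex matrix satisfying −(1 − ε) C⁻¹ ≤ K. Then both 1 + CK and 1 + KC are invertible. -/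
open Matrix
open scoped ComplexOrder

/-! Factor `1 + C K = C (C⁻¹ + K)` and `1 + K C = (C⁻¹ + K) C`. The hypothesis says that
`C⁻¹ + K = (K + (1 - ε) C⁻¹) + ε C⁻¹` is positive semidefinite plus positive definite,
hence positive definite and in particular invertible. -/

namespace Matrix

variable {m : Type*} [Fintype m] [DecidableEq m]

theorem isUnit_one_add_mul_iff_isUnit_inv_add {R : Type*} [CommRing R] {C : Matrix m m R}
    (hC : IsUnit C) (K : Matrix m m R) : IsUnit (1 + C * K) ↔ IsUnit (C⁻¹ + K) := by
  have hdet : IsUnit C.det := (isUnit_iff_isUnit_det C).mp hC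
  rw [show 1 + C * K = C * (C⁻¹ + K) by rw [mul_add, mul_nonsing_inv C hdet], hC.mul_left_iff]

theorem isUnit_one_add_mul_iff_isUnit_inv_add' {R : Type*} [CommRing R] {C : Matrix m m R}
    (hC : IsUnit C) (K : Matrix m m R) : IsUnit (1 + K * C) ↔ IsUnit (C⁻¹ + K) := by
  have hdet : IsUnit C.det := (isUnit_iff_isUnit_det C).mp hC
  rw [show 1 + K * C = (C⁻¹ + K) * C by rw [add_mul, nonsing_inv_mul C hdet], hC.mul_right_iff]

theorem PosDef.inv_add_of_posSemidef_add_smul_inv {𝕜 : Type*} [RCLike 𝕜] {C K : Matrix m m 𝕜}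
    (hC : C.PosDef) {ε : ℝ} (hε : 0 < ε) (hK : (K + (1 - ε) • C⁻¹).PosSemidef) :
    (C⁻¹ + K).PosDef := by
  have hsplit : C⁻¹ + K = (K + (1 - ε) • C⁻¹) + ε • C⁻¹ := by
    rw [add_assoc, ← add_smul, sub_add_cancel, one_smul, add_comm]
  rw [hsplit]
  exact PosDef.posSemidef_add hK (hC.inv.smul hε)

end Matrix

theorem stmt_10_general {n : ℕ}
    (C K : Matrix (Fin n) (Fin n) ℂ)
    (hC : C.PosDef) (ε : ℝ) (hε : 0 < ε)
    (hKbound : (K - (-((1 - ε : ℝ) • C⁻¹))).PosSemidef) :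
    IsUnit (1 + C * K) ∧ IsUnit (1 + K * C) := by
  rw [sub_neg_eq_add] at hKbound
  have hunit : IsUnit (C⁻¹ + K) := (hC.inv_add_of_posSemidef_add_smul_inv hε hKbound).isUnit
  exact ⟨(isUnit_one_add_mul_iff_isUnit_inv_add hC.isUnit K).mpr hunit,
    (isUnit_one_add_mul_iff_isUnit_inv_add' hC.isUnit K).mpr hunit⟩

/-- If `C` is Hermitian positive definite, `0 < ε ≤ 1`, and `K` is Hermitian with
`-(1 - ε) C⁻¹ ≤ K`, then `1 + C K` and `1 + K C` are invertible. -/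
theorem stmt_10 {n : ℕ}
    (C K : Matrix (Fin n) (Fin n) ℂ)
    (hC : C.PosDef) (ε : ℝ) (hε : 0 < ε) (hε' : ε ≤ 1)
    (hK : K.IsHermitian)
    (hKbound : (K - (-((1 - ε : ℝ) • C⁻¹))).PosSemidef) :
    IsUnit (1 + C * K) ∧ IsUnit (1 + K * C) :=
  stmt_10_general C K hC ε hε hKbound
end

section
/- Let R be an m×n complex matrix and S a Hermitian n×n complex matrix. Then the set { Rᴴ T R + S : T a Hermitian m×m complex matrix with 0 ≤ T ≤ 1 } is equal to the order interval { X : X Hermitian n×n and S ≤ X ≤ S + Rᴴ R }. -/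
open Matrix
open scoped ComplexOrder

/-!
The inclusion `⊆` is congruence `T ↦ Rᴴ T R` applied to `0 ≤ T ≤ 1`. For `⊇`, put
`A = X - S`, so `0 ≤ A ≤ B := Rᴴ R`, and let `G` be a Hermitian generalized inverse of `B`
(`B G B = B`, `G B G = G`). Since `A ≤ B`, the kernel of `B` lies in the kernel of `A`, so
`A G B = A` and, taking adjoints, `B G A = A`. Hence `T := R G A G Rᴴ` satisfies `Rᴴ T R = A`,
and `0 ≤ T ≤ R G B G Rᴴ = R G Rᴴ ≤ 1`, the last matrix being an orthogonal projection.
-/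
open scoped MatrixOrder

namespace Matrix

variable {𝕜 : Type*} [RCLike 𝕜] {m n k : Type*} [Fintype m] [Fintype n]

lemma IsHermitian.exists_pseudoinverse {B : Matrix n n 𝕜} (hB : B.IsHermitian) :
    ∃ G : Matrix n n 𝕜, G.IsHermitian ∧ B * G * B = B ∧ G * B * G = G := by
  classical
  have hcont (f : ℝ → ℝ) : ContinuousOn f (spectrum ℝ B) :=
    finite_real_spectrum.continuousOn f
  have hid : cfc (fun x : ℝ ↦ x) B = B := cfc_id' ℝ B hB
  -- `cfc (·⁻¹)` inverts the nonzero eigenvalues and keeps `0` since `(0 : ℝ)⁻¹ = 0`.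
  refine ⟨cfc (·⁻¹ : ℝ → ℝ) B, cfc_predicate _ B, ?_, ?_⟩
  · calc B * cfc (·⁻¹) B * B = cfc (fun x : ℝ ↦ x * x⁻¹ * x) B := by
          rw [cfc_mul _ _ B (hcont _) (hcont _), cfc_mul _ _ B (hcont _) (hcont _), hid]
      _ = B := by simpa only [mul_inv_mul_cancel] using hid
  · calc cfc (·⁻¹) B * B * cfc (·⁻¹) B = cfc (fun x : ℝ ↦ x⁻¹ * x * x⁻¹) B := by
          rw [cfc_mul _ _ B (hcont _) (hcont _), cfc_mul _ _ B (hcont _) (hcont _), hid]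
      _ = cfc (·⁻¹) B := by
          congr 1; funext x; simpa only [inv_inv] using mul_inv_mul_cancel x⁻¹

lemma PosSemidef.mul_eq_zero_of_conjTranspose_mul_mul_eq_zero {A : Matrix n n 𝕜}
    (hA : A.PosSemidef) {E : Matrix n k 𝕜} (h : Eᴴ * A * E = 0) : A * E = 0 := by
  classical
  obtain ⟨C, rfl⟩ := CStarAlgebra.nonneg_iff_eq_star_mul_self.mp hA.nonneg
  have hCE : C * E = 0 := by
    rw [← conjTranspose_mul_self_eq_zero, conjTranspose_mul]
    simpa only [Matrix.mul_assoc, star_eq_conjTranspose] using h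
  rw [Matrix.mul_assoc, hCE, Matrix.mul_zero]

lemma PosSemidef.mul_eq_zero_of_le_of_mul_eq_zero [Fintype k] {A B : Matrix n n 𝕜}
    (hA : A.PosSemidef) (hAB : A ≤ B) {E : Matrix n k 𝕜} (hBE : B * E = 0) : A * E = 0 := by
  refine hA.mul_eq_zero_of_conjTranspose_mul_mul_eq_zero <|
    le_antisymm ?_ (hA.conjTranspose_mul_mul_same E).nonneg
  have h := (le_iff.mp hAB).conjTranspose_mul_mul_same E
  rwa [Matrix.mul_sub, Matrix.sub_mul, Matrix.mul_assoc Eᴴ B, hBE, Matrix.mul_zero] at h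

lemma conjTranspose_mul_mul_le_conjTranspose_mul_mul {A B : Matrix m m 𝕜} (h : A ≤ B)
    (R : Matrix m n 𝕜) : Rᴴ * A * R ≤ Rᴴ * B * R := by
  rw [le_iff, ← Matrix.sub_mul, ← Matrix.mul_sub]
  exact (le_iff.mp h).conjTranspose_mul_mul_same R

theorem exists_conjTranspose_mul_mul_eq_of_le [DecidableEq m] {R : Matrix m n 𝕜}
    {A : Matrix n n 𝕜} (hA : 0 ≤ A) (hAR : A ≤ Rᴴ * R) :
    ∃ T : Matrix m m 𝕜, 0 ≤ T ∧ T ≤ 1 ∧ Rᴴ * T * R = A := by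
  classical
  obtain ⟨G, hG, hBGB, hGBG⟩ := (isHermitian_conjTranspose_mul_self R).exists_pseudoinverse
  have hAP : A * (G * (Rᴴ * R)) = A := by
    have := hA.posSemidef.mul_eq_zero_of_le_of_mul_eq_zero hAR (E := 1 - G * (Rᴴ * R))
      (by rw [Matrix.mul_sub, Matrix.mul_one, ← Matrix.mul_assoc, hBGB, sub_self])
    rwa [Matrix.mul_sub, Matrix.mul_one, sub_eq_zero, eq_comm] at this
  have hPA : Rᴴ * R * G * A = A := by
    simpa only [conjTranspose_mul, conjTranspose_conjTranspose, hG.eq, hA.posSemidef.isHermitian.eq,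
      Matrix.mul_assoc] using congr(($hAP)ᴴ)
  have hQ : IsStarProjection (R * G * Rᴴ) := by
    refine ⟨?_, ?_⟩
    · calc R * G * Rᴴ * (R * G * Rᴴ) = R * (G * (Rᴴ * R) * G) * Rᴴ := by
            simp only [Matrix.mul_assoc]
        _ = R * G * Rᴴ := by rw [hGBG]
    · rw [IsSelfAdjoint, star_eq_conjTranspose, conjTranspose_mul, conjTranspose_mul, hG.eq,
        conjTranspose_conjTranspose, Matrix.mul_assoc]
  refine ⟨(G * Rᴴ)ᴴ * A * (G * Rᴴ), ?_, ?_, ?_⟩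
  · exact (hA.posSemidef.conjTranspose_mul_mul_same _).nonneg
  · calc (G * Rᴴ)ᴴ * A * (G * Rᴴ) ≤ (G * Rᴴ)ᴴ * (Rᴴ * R) * (G * Rᴴ) :=
          conjTranspose_mul_mul_le_conjTranspose_mul_mul hAR _
      _ = R * (G * (Rᴴ * R) * G) * Rᴴ := by
          rw [conjTranspose_mul, conjTranspose_conjTranspose, hG.eq]
          simp only [Matrix.mul_assoc]
      _ = R * G * Rᴴ := by rw [hGBG]
      _ ≤ 1 := hQ.le_one
  · calc Rᴴ * ((G * Rᴴ)ᴴ * A * (G * Rᴴ)) * R = Rᴴ * R * G * (A * (G * (Rᴴ * R))) := by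
          rw [conjTranspose_mul, conjTranspose_conjTranspose, hG.eq]
          simp only [Matrix.mul_assoc]
      _ = A := by rw [hAP, hPA]

end Matrix

/-- For `R` an `m × n` matrix and `S` Hermitian, the set `{ Rᴴ T R + S : 0 ≤ T ≤ 1 }`
equals the order interval `{ X Hermitian : S ≤ X ≤ S + Rᴴ R }`. -/
theorem stmt_13 {m n : ℕ}
    (R : Matrix (Fin m) (Fin n) ℂ) (S : Matrix (Fin n) (Fin n) ℂ)
    (hS : S.IsHermitian) :
    {X : Matrix (Fin n) (Fin n) ℂ |
        ∃ T : Matrix (Fin m) (Fin m) ℂ,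
          T.PosSemidef ∧ (1 - T).PosSemidef ∧ X = Rᴴ * T * R + S}
      = {X : Matrix (Fin n) (Fin n) ℂ |
          X.IsHermitian ∧ (X - S).PosSemidef ∧ ((S + Rᴴ * R) - X).PosSemidef} := by
  ext X
  simp only [Set.mem_ofPred_eq, ← nonneg_iff_posSemidef, sub_nonneg]
  constructor
  · rintro ⟨T, hT₀, hT₁, rfl⟩
    refine ⟨(isHermitian_conjTranspose_mul_mul R hT₀.posSemidef.isHermitian).add hS, ?_, ?_⟩
    · exact le_add_of_nonneg_left (hT₀.posSemidef.conjTranspose_mul_mul_same R).nonneg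
    · simpa only [Matrix.mul_one, add_comm S] using
        add_le_add_right (conjTranspose_mul_mul_le_conjTranspose_mul_mul hT₁ R) S
  · rintro ⟨-, hSX, hXR⟩
    obtain ⟨T, hT₀, hT₁, hT⟩ :=
      exists_conjTranspose_mul_mul_eq_of_le (sub_nonneg.mpr hSX) (sub_le_iff_le_add'.mpr hXR)
    exact ⟨T, hT₀, hT₁, by rw [hT, sub_add_cancel]⟩
end
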